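/- arXiv:1609.01999 — 3 statements merged into one kernel-verified Lean document; each statement's English description precedes it below -/
import Mathlib

section
/- Let A, B_1, ..., B_m be self-adjoint d×d matrices and p_1,...,p_m nonnegative weights summing to 1. If the eigenvalue vector λ(A) is weakly majorized by the convex combination sum_l p_l λ(B_l) (eigenvalues in decreasing order), then for every non-decreasing convex function f : R → [0,∞) and every unitarily invariant norm ‖·‖, one has ‖f(A)‖ ≤ sum_l p_l ‖f(B_l)‖. -/
open scoped BigOperators ComplexOrder

/-- The eigenvalues of a Hermitian matrix arranged in decreasing order
(counting multiplicities). -/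
noncomputable def eigDesc {d : ℕ} {A : Matrix (Fin d) (Fin d) ℂ} (hA : A.IsHermitian) :
    Fin d → ℝ :=
  fun i => (hA.eigenvalues ∘ Tuple.sort hA.eigenvalues) i.rev

/-- Functional calculus for a Hermitian matrix: apply `f` to the eigenvalues in the
spectral decomposition. -/
noncomputable def herFun {d : ℕ} {A : Matrix (Fin d) (Fin d) ℂ} (hA : A.IsHermitian)
    (f : ℝ → ℝ) : Matrix (Fin d) (Fin d) ℂ :=
  (hA.eigenvectorUnitary : Matrix (Fin d) (Fin d) ℂ) *
    Matrix.diagonal (fun i => (f (hA.eigenvalues i) : ℂ)) *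
    star (hA.eigenvectorUnitary : Matrix (Fin d) (Fin d) ℂ)

/-- A unitarily invariant norm on `d × d` complex matrices: a norm `N` with
`N (U X V) = N X` for all unitaries `U, V`. -/
structure UINorm (d : ℕ) where
  N : Matrix (Fin d) (Fin d) ℂ → ℝ
  add_le : ∀ X Y, N (X + Y) ≤ N X + N Y
  smul_eq : ∀ (c : ℂ) X, N (c • X) = ‖c‖ * N X
  pos_of_ne : ∀ X : Matrix (Fin d) (Fin d) ℂ, X ≠ 0 → (0:ℝ) < N X
  unitary_inv : ∀ U V X, U ∈ Matrix.unitaryGroup (Fin d) ℂ →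
    V ∈ Matrix.unitaryGroup (Fin d) ℂ → N (U * X * V) = N X

/-!
Write `x = λ(A)`, `y = ∑ l, p l • λ(B l)` and `c = ∑ l, p l • f ∘ λ(B l)`. Since `f` is monotone
and convex and `x` is decreasing, Tomić's theorem (Abel summation against the slopes of `f` at the
points `x i`, which decrease and are nonnegative) gives `f ∘ x ≺_w f ∘ y`, and Jensen gives
`f ∘ y ≤ c` entrywise; so `f ∘ x ≺_w c`, two decreasing nonnegative vectors.

The symmetric gauge `Ψ v = ‖diag v‖` of the norm is invariant under permutations and sign changes
and convex, hence monotone on nonnegative vectors. By the Hardy–Littlewood–Pólya argument such a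
functional respects weak majorization of decreasing nonnegative vectors: peel off the largest entry
of the smaller vector, and put it into the larger one by a T-transform, which does not increase
`Ψ`. Therefore `‖f(A)‖ = Ψ (f ∘ x) ≤ Ψ c ≤ ∑ l, p l * Ψ (f ∘ λ(B l)) = ∑ l, p l * ‖f(B l)‖`,
the middle step by convexity of `Ψ`.
-/

open Set Function

section Majorization

variable {n : ℕ}

def partialSum (v : Fin n → ℝ) (k : ℕ) : ℝ :=
  ∑ i ∈ Finset.univ.filter (fun i : Fin n => (i : ℕ) < k), v i

/-- No sorting takes place: this is `x ≺_w y` for vectors given in decreasing order. -/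
def WeakMajorized (x y : Fin n → ℝ) : Prop :=
  ∀ k ≤ n, partialSum x k ≤ partialSum y k

@[simp] lemma partialSum_zero (v : Fin n → ℝ) : partialSum v 0 = 0 := by
  simp [partialSum]

lemma partialSum_succ (v : Fin n → ℝ) {k : ℕ} (hk : k < n) :
    partialSum v (k + 1) = partialSum v k + v ⟨k, hk⟩ := by
  have : Finset.univ.filter (fun i : Fin n => (i : ℕ) < k + 1) =
      insert ⟨k, hk⟩ (Finset.univ.filter (fun i : Fin n => (i : ℕ) < k)) := by
    ext i
    simp only [Finset.mem_filter, Finset.mem_univ, true_and, Finset.mem_insert, Fin.ext_iff]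
    omega
  rw [partialSum, this, Finset.sum_insert (by simp), add_comm]
  rfl

lemma partialSum_cons_succ (a : ℝ) (v : Fin n → ℝ) (k : ℕ) :
    partialSum (Fin.cons a v : Fin (n + 1) → ℝ) (k + 1) = a + partialSum v k := by
  simp [partialSum, Finset.sum_filter, Fin.sum_univ_succ]

lemma partialSum_sub (v w : Fin n → ℝ) (k : ℕ) :
    partialSum (v - w) k = partialSum v k - partialSum w k := by
  simp [partialSum, Finset.sum_sub_distrib]

lemma partialSum_le_partialSum {v w : Fin n → ℝ} (h : v ≤ w) (k : ℕ) :
    partialSum v k ≤ partialSum w k :=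
  Finset.sum_le_sum fun i _ => h i

lemma partialSum_congr {v w : Fin n → ℝ} {k : ℕ} (h : ∀ i : Fin n, (i : ℕ) < k → v i = w i) :
    partialSum v k = partialSum w k :=
  Finset.sum_congr rfl fun i hi => h i (Finset.mem_filter.1 hi).2

lemma WeakMajorized.trans_le {x y z : Fin n → ℝ} (hxy : WeakMajorized x y) (hyz : y ≤ z) :
    WeakMajorized x z :=
  fun k hk => (hxy k hk).trans (partialSum_le_partialSum hyz k)

/-- Abel summation. The induction carries a nonnegative lower bound `t` of the weights used so
far. -/
lemma partialSum_mul_nonneg {s δ : Fin n → ℝ} (hs : Antitone s) (hs0 : 0 ≤ s)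
    (hδ : ∀ k ≤ n, 0 ≤ partialSum δ k) {k : ℕ} (hk : k ≤ n) : 0 ≤ partialSum (s * δ) k := by
  suffices key : ∀ t, 0 ≤ t → (∀ i : Fin n, (i : ℕ) < k → t ≤ s i) →
      t * partialSum δ k ≤ partialSum (s * δ) k by
    simpa using key 0 le_rfl fun i _ => hs0 i
  induction k with
  | zero => simp
  | succ k ih =>
    intro t ht hts
    have hkn : k < n := hk
    set i : Fin n := ⟨k, hkn⟩
    have hsi : ∀ i' : Fin n, (i' : ℕ) < k → s i ≤ s i' :=
      fun i' hi' => hs (Fin.le_def.2 hi'.le)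
    calc t * partialSum δ (k + 1) ≤ s i * partialSum δ (k + 1) :=
          mul_le_mul_of_nonneg_right (hts i (Nat.lt_succ_self k)) (hδ _ hk)
      _ = s i * partialSum δ k + s i * δ i := by rw [partialSum_succ _ hkn, mul_add]
      _ ≤ partialSum (s * δ) k + s i * δ i := by gcongr; exact ih hkn.le _ (hs0 i) hsi
      _ = partialSum (s * δ) (k + 1) := by rw [partialSum_succ _ hkn]; rfl

lemma ConvexOn.add_rightDeriv_mul_sub_le {f : ℝ → ℝ} (hf : ConvexOn ℝ univ f) (t w : ℝ) :
    f t + derivWithin f (Ioi t) t * (w - t) ≤ f w := by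
  have ht : t ∈ interior univ := by simp
  rcases lt_trichotomy t w with htw | rfl | hwt
  · have h := hf.rightDeriv_le_slope_of_mem_interior ht (mem_univ w) htw
    rw [slope_def_field, le_div_iff₀ (sub_pos.2 htw)] at h
    linarith
  · simp
  · have h := (hf.slope_le_leftDeriv_of_mem_interior (mem_univ w) ht hwt).trans
      (hf.leftDeriv_le_rightDeriv_of_mem_interior ht)
    rw [slope_def_field, div_le_iff₀ (sub_pos.2 hwt)] at h
    linarith

lemma ConvexOn.monotone_rightDeriv {f : ℝ → ℝ} (hf : ConvexOn ℝ univ f) :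
    Monotone fun t => derivWithin f (Ioi t) t := by
  simpa using hf.monotoneOn_rightDeriv

lemma Monotone.rightDeriv_nonneg {f : ℝ → ℝ} (hmono : Monotone f) (hf : ConvexOn ℝ univ f)
    (t : ℝ) : 0 ≤ derivWithin f (Ioi t) t := by
  have := hf.add_rightDeriv_mul_sub_le t (t - 1)
  have := hmono (sub_le_self t zero_le_one)
  linarith

/-- Tomić's theorem. -/
theorem WeakMajorized.comp_convex {x y : Fin n → ℝ} (hxy : WeakMajorized x y) (hx : Antitone x)
    {f : ℝ → ℝ} (hmono : Monotone f) (hf : ConvexOn ℝ univ f) :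
    WeakMajorized (f ∘ x) (f ∘ y) := by
  intro k hk
  set s : Fin n → ℝ := fun i => derivWithin f (Ioi (x i)) (x i)
  have hsupport : s * (y - x) ≤ f ∘ y - f ∘ x := fun i => by
    have := hf.add_rightDeriv_mul_sub_le (x i) (y i)
    simp only [Pi.mul_apply, Pi.sub_apply, comp_apply]
    linarith
  have habel : 0 ≤ partialSum (s * (y - x)) k :=
    partialSum_mul_nonneg (hf.monotone_rightDeriv.comp_antitone hx)
      (fun i => hmono.rightDeriv_nonneg hf _)
      (fun k hk => by rw [partialSum_sub]; linarith [hxy k hk]) hk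
  have := partialSum_le_partialSum hsupport k
  rw [partialSum_sub] at this
  linarith

lemma Fin.val_succAbove (p : Fin (n + 1)) (i : Fin n) :
    (p.succAbove i : ℕ) = if (i : ℕ) < p then (i : ℕ) else (i : ℕ) + 1 := by
  by_cases h : (i : ℕ) < p
  · rw [Fin.succAbove_of_castSucc_lt _ _ (Fin.lt_def.2 h), if_pos h, Fin.val_castSucc]
  · rw [Fin.succAbove_of_le_castSucc _ _ (Fin.le_def.2 (not_lt.1 h)), if_neg h, Fin.val_succ]

lemma partialSum_removeNth_of_le (v : Fin (n + 1) → ℝ) {p : Fin (n + 1)} {k : ℕ}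
    (hk : k ≤ p) : partialSum (p.removeNth v) k = partialSum v k := by
  simp only [partialSum, Finset.sum_filter, Fin.sum_univ_succAbove _ p, Fin.removeNth_apply,
    if_neg (not_lt.2 hk), zero_add]
  refine Finset.sum_congr rfl fun i _ => if_congr ?_ rfl rfl
  rw [Fin.val_succAbove]
  split_ifs <;> omega

lemma partialSum_removeNth_add (v : Fin (n + 1) → ℝ) {p : Fin (n + 1)} {k : ℕ}
    (hk : (p : ℕ) ≤ k) : partialSum (p.removeNth v) k + v p = partialSum v (k + 1) := by
  simp only [partialSum, Finset.sum_filter, Fin.sum_univ_succAbove _ p, Fin.removeNth_apply,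
    if_pos (Nat.lt_succ_of_le hk), add_comm (v p)]
  congr 1
  refine Finset.sum_congr rfl fun i _ => if_congr ?_ rfl rfl
  rw [Fin.val_succAbove]
  split_ifs <;> omega

lemma Antitone.partialSum_tail_le {x : Fin (n + 1) → ℝ} (hx : Antitone x) {k : ℕ}
    (hk : k ≤ n) : partialSum (Fin.tail x) k ≤ partialSum x k := by
  have h := partialSum_cons_succ (x 0) (Fin.tail x) k
  rw [Fin.cons_self_tail, partialSum_succ x (Nat.lt_succ_of_le hk)] at h
  linarith [hx (Fin.zero_le ⟨k, Nat.lt_succ_of_le hk⟩)]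

def tTransform (y : Fin (n + 1) → ℝ) (j : Fin n) (a : ℝ) : Fin (n + 1) → ℝ :=
  update (update y j.castSucc a) j.succ (y j.castSucc + y j.succ - a)

section tTransform

variable (y : Fin (n + 1) → ℝ) (j : Fin n) (a : ℝ)

lemma tTransform_castSucc : tTransform y j a j.castSucc = a := by
  simp [tTransform, Fin.castSucc_lt_succ.ne]

lemma tTransform_mem_segment (ha : a ∈ segment ℝ (y j.castSucc) (y j.succ)) :
    tTransform y j a ∈ segment ℝ y (y ∘ Equiv.swap j.castSucc j.succ) := by
  obtain ⟨s, t, hs, ht, hst, rfl⟩ := ha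
  refine ⟨s, t, hs, ht, hst, funext fun i => ?_⟩
  have hne : j.castSucc ≠ j.succ := Fin.castSucc_lt_succ.ne
  by_cases h1 : i = j.castSucc
  · subst h1
    simp [tTransform, hne]
  by_cases h2 : i = j.succ
  · subst h2
    simp only [tTransform, update_self, Pi.add_apply, Pi.smul_apply, comp_apply,
      Equiv.swap_apply_right, smul_eq_mul]
    linear_combination (y j.castSucc + y j.succ) * hst
  · simp [tTransform, h1, h2, Equiv.swap_apply_of_ne_of_ne, ← add_mul, hst]

lemma partialSum_tTransform_of_le {k : ℕ} (hk : k ≤ j) :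
    partialSum (tTransform y j a) k = partialSum y k :=
  partialSum_congr fun i hi => by
    have h1 : i ≠ j.castSucc := fun h => by simp [h] at hi; omega
    have h2 : i ≠ j.succ := fun h => by simp [h] at hi; omega
    simp [tTransform, h1, h2]

lemma partialSum_tTransform_of_lt {k : ℕ} (hk : (j : ℕ) + 1 < k) :
    partialSum (tTransform y j a) k = partialSum y k := by
  have hne : j.succ ≠ j.castSucc := Fin.castSucc_lt_succ.ne'
  set s := Finset.univ.filter (fun i : Fin (n + 1) => (i : ℕ) < k)
  have h1 : j.succ ∈ s := by simp [s]; omega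
  have h2 : j.castSucc ∈ s.erase j.succ := by simp [s, hne.symm]; omega
  rw [partialSum, partialSum, tTransform, ← Finset.add_sum_erase _ _ h1,
    ← Finset.add_sum_erase _ _ h1, ← Finset.add_sum_erase _ _ h2, ← Finset.add_sum_erase _ _ h2,
    Finset.sum_congr rfl fun i hi => ?_]
  · simp [update_of_ne hne.symm]
    ring
  · simp only [Finset.mem_erase] at hi
    simp [hi.1, hi.2.1]

lemma removeNth_tTransform_mem_Icc (hy : Antitone y) (ha : a ∈ Icc (y j.succ) (y j.castSucc))
    (i : Fin n) : j.castSucc.removeNth (tTransform y j a) i ∈ Icc (y i.succ) (y i.castSucc) := by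
  have hy' : y i.succ ≤ y i.castSucc := hy (Fin.castSucc_le_succ i)
  rcases lt_trichotomy i j with h | rfl | h
  · have h1 : i.castSucc ≠ j.succ := (Fin.castSucc_lt_succ_iff.2 h.le).ne
    simp [Fin.removeNth_apply, tTransform, h.ne, h1, hy',
      Fin.succAbove_of_castSucc_lt _ _ (Fin.castSucc_lt_castSucc_iff.2 h)]
  · simp only [Fin.removeNth_apply, Fin.succAbove_castSucc_self, tTransform, update_self,
      mem_Icc]
    constructor <;> linarith [ha.1, ha.2]
  · have h1 : i.succ ≠ j.castSucc := (Fin.castSucc_lt_succ_iff.2 h.le).ne'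
    have h2 : i.succ ≠ j.succ := fun e => h.ne' (Fin.succ_injective _ e)
    simp [Fin.removeNth_apply, tTransform, h1, h2, hy',
      Fin.succAbove_of_le_castSucc _ _ (Fin.castSucc_le_castSucc_iff.2 h.le)]

end tTransform

lemma weakMajorized_tail_removeNth_tTransform {x y : Fin (n + 1) → ℝ} (hx : Antitone x)
    (hxy : WeakMajorized x y) (j : Fin n) :
    WeakMajorized (Fin.tail x) (j.castSucc.removeNth (tTransform y j (x 0))) := by
  intro k hk
  rcases le_or_gt k j with hkj | hjk
  · rw [partialSum_removeNth_of_le _ hkj, partialSum_tTransform_of_le _ _ _ hkj]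
    exact (hx.partialSum_tail_le hk).trans (hxy k (by omega))
  · have hy := partialSum_removeNth_add (tTransform y j (x 0)) (p := j.castSucc) hjk.le
    rw [tTransform_castSucc, partialSum_tTransform_of_lt _ _ _ (by omega)] at hy
    have hx' := partialSum_cons_succ (x 0) (Fin.tail x) k
    rw [Fin.cons_self_tail] at hx'
    linarith [hxy (k + 1) (by omega)]

lemma Fin.exists_le_castSucc_succ_lt {y : Fin (n + 1) → ℝ} {a : ℝ} (h0 : a ≤ y 0)
    (hlast : y (Fin.last n) < a) : ∃ j : Fin n, a ≤ y j.castSucc ∧ y j.succ < a := by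
  induction n with
  | zero => exact absurd h0 (not_le.2 hlast)
  | succ n ih =>
    by_cases h1 : y 1 < a
    · exact ⟨0, h0, h1⟩
    · obtain ⟨j, hj⟩ := ih (y := Fin.tail y) (not_lt.1 h1) hlast
      exact ⟨j.succ, hj⟩

lemma antitone_of_mem_Icc_succ_castSucc {y : Fin (n + 1) → ℝ} {z : Fin n → ℝ}
    (hy : Antitone y) (h : ∀ i, z i ∈ Icc (y i.succ) (y i.castSucc)) : Antitone z := by
  intro i i' hii'
  rcases hii'.eq_or_lt with rfl | hlt
  · exact le_rfl
  · exact (h i').2.trans ((hy (Fin.succ_le_castSucc_iff.2 hlt)).trans (h i).1)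

section Cons

variable {Ψ : (Fin (n + 1) → ℝ) → ℝ}

lemma comp_cons_removeNth (hperm : ∀ (σ : Equiv.Perm (Fin (n + 1))) v, Ψ (v ∘ σ) = Ψ v)
    (v : Fin (n + 1) → ℝ) (p : Fin (n + 1)) : Ψ (Fin.cons (v p) (p.removeNth v)) = Ψ v := by
  convert hperm p.cycleRange.symm v using 2
  funext i
  cases i using Fin.cases <;> simp [Fin.cycleRange_symm_succ, Fin.removeNth_apply]

lemma comp_perm_cons (hperm : ∀ (σ : Equiv.Perm (Fin (n + 1))) v, Ψ (v ∘ σ) = Ψ v) (a : ℝ)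
    (σ : Equiv.Perm (Fin n)) (v : Fin n → ℝ) : Ψ (Fin.cons a (v ∘ σ)) = Ψ (Fin.cons a v) := by
  convert hperm (Equiv.Perm.decomposeFin.symm (0, σ)) (Fin.cons a v) using 2
  funext i
  cases i using Fin.cases <;> simp [Equiv.Perm.decomposeFin_symm_apply_succ]

lemma QuasiconvexOn.comp_cons (hqc : QuasiconvexOn ℝ univ Ψ) (a : ℝ) :
    QuasiconvexOn ℝ univ fun v : Fin n → ℝ => Ψ (Fin.cons a v) := by
  refine quasiconvexOn_iff_le_max.2 ⟨convex_univ, fun u _ v _ s t hs ht hst => ?_⟩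
  convert (quasiconvexOn_iff_le_max.1 hqc).2 (mem_univ (Fin.cons a u))
    (mem_univ (Fin.cons a v)) hs ht hst using 2
  funext i
  cases i using Fin.cases
  · simp [← add_mul, hst]
  · simp

lemma MonotoneOn.comp_cons (hmono : MonotoneOn Ψ (Ici 0)) {a : ℝ} (ha : 0 ≤ a) :
    MonotoneOn (fun v : Fin n → ℝ => Ψ (Fin.cons a v)) (Ici 0) := by
  intro u hu v hv huv
  refine hmono ?_ ?_ (Fin.cons_le_cons.2 ⟨le_rfl, huv⟩)
  · exact fun i => Fin.cases (by simpa using ha) (fun i => by simpa using hu i) i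
  · exact fun i => Fin.cases (by simpa using ha) (fun i => by simpa using hv i) i

end Cons

lemma QuasiconvexOn.le_of_mem_segment_comp_perm {ι : Type*} {Ψ : (ι → ℝ) → ℝ}
    (hqc : QuasiconvexOn ℝ univ Ψ) (hperm : ∀ (σ : Equiv.Perm ι) v, Ψ (v ∘ σ) = Ψ v)
    {v z : ι → ℝ} {σ : Equiv.Perm ι} (hz : z ∈ segment ℝ v (v ∘ σ)) : Ψ z ≤ Ψ v :=
  ((hqc (Ψ v)).segment_subset ⟨mem_univ _, le_rfl⟩ ⟨mem_univ _, (hperm σ v).le⟩ hz).2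

/-- Hardy–Littlewood–Pólya for symmetric quasiconvex functionals. -/
theorem WeakMajorized.le_of_quasiconvexOn {Ψ : (Fin n → ℝ) → ℝ}
    (hperm : ∀ (σ : Equiv.Perm (Fin n)) v, Ψ (v ∘ σ) = Ψ v) (hqc : QuasiconvexOn ℝ univ Ψ)
    (hmono : MonotoneOn Ψ (Ici 0)) {x y : Fin n → ℝ} (hxy : WeakMajorized x y)
    (hx : Antitone x) (hy : Antitone y) (hx0 : 0 ≤ x) : Ψ x ≤ Ψ y := by
  induction n with
  | zero => rw [Subsingleton.elim x y]
  | succ n ih =>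
    by_cases hlast : x 0 ≤ y (Fin.last n)
    · have hle : x ≤ y := fun i => (hx (Fin.zero_le i)).trans (hlast.trans (hy (Fin.le_last i)))
      exact hmono hx0 (hx0.trans hle) hle
    have h0 : x 0 ≤ y 0 := by simpa [partialSum_succ] using hxy 1 (by omega)
    obtain ⟨j, hj, hj'⟩ := Fin.exists_le_castSucc_succ_lt h0 (not_le.1 hlast)
    have hIcc : x 0 ∈ Icc (y j.succ) (y j.castSucc) := ⟨hj'.le, hj⟩
    calc Ψ x = Ψ (Fin.cons (x 0) (Fin.tail x)) := by rw [Fin.cons_self_tail]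
      _ ≤ Ψ (Fin.cons (x 0) (j.castSucc.removeNth (tTransform y j (x 0)))) :=
        ih (comp_perm_cons hperm (x 0)) (hqc.comp_cons (x 0)) (hmono.comp_cons (hx0 0))
          (weakMajorized_tail_removeNth_tTransform hx hxy j)
          (hx.comp_monotone Fin.strictMono_succ.monotone)
          (antitone_of_mem_Icc_succ_castSucc hy (removeNth_tTransform_mem_Icc y j _ hy hIcc))
          (fun i => hx0 i.succ)
      _ = Ψ (tTransform y j (x 0)) := by
        simpa [tTransform_castSucc] using
          comp_cons_removeNth hperm (tTransform y j (x 0)) j.castSucc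
      _ ≤ Ψ y := hqc.le_of_mem_segment_comp_perm hperm
        (tTransform_mem_segment y j _ (by rw [segment_symm]; exact Icc_subset_segment hIcc))

end Majorization

lemma mem_segment_neg_of_abs_le {b c : ℝ} (h : |c| ≤ |b|) : c ∈ segment ℝ b (-b) := by
  rw [segment_eq_uIcc, mem_uIcc]
  rcases le_total 0 b with hb | hb
  · right; constructor <;> linarith [abs_le.1 (h.trans_eq (abs_of_nonneg hb))]
  · left; constructor <;> linarith [abs_le.1 (h.trans_eq (abs_of_nonpos hb))]

lemma QuasiconvexOn.le_of_abs_le {ι : Type*} [Fintype ι] [DecidableEq ι] {Ψ : (ι → ℝ) → ℝ}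
    (hqc : QuasiconvexOn ℝ univ Ψ) (hneg : ∀ v i, Ψ (update v i (-v i)) = Ψ v) {u v : ι → ℝ}
    (h : ∀ i, |u i| ≤ |v i|) : Ψ u ≤ Ψ v := by
  suffices ∀ s : Finset ι, Ψ (s.piecewise u v) ≤ Ψ v by simpa using this Finset.univ
  intro s
  induction s using Finset.induction_on with
  | empty => simp
  | insert j s hj ih =>
    set w := s.piecewise u v
    have hseg : update w j (u j) ∈ segment ℝ w (update w j (-w j)) := by
      have himage := Pi.image_update_segment (𝕜 := ℝ) j (w j) (-w j) w
      rw [update_eq_self] at himage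
      rw [← himage]
      refine ⟨u j, mem_segment_neg_of_abs_le ?_, rfl⟩
      simpa only [w, Finset.piecewise_eq_of_notMem _ _ _ hj] using h j
    rw [Finset.piecewise_insert]
    exact (((hqc (Ψ w)).segment_subset ⟨mem_univ _, le_rfl⟩
      ⟨mem_univ _, (hneg w j).le⟩ hseg).2).trans ih

lemma QuasiconvexOn.monotoneOn_of_neg {ι : Type*} [Fintype ι] [DecidableEq ι]
    {Ψ : (ι → ℝ) → ℝ} (hqc : QuasiconvexOn ℝ univ Ψ)
    (hneg : ∀ v i, Ψ (update v i (-v i)) = Ψ v) : MonotoneOn Ψ (Ici 0) :=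
  fun _ hu _ _ huv => hqc.le_of_abs_le hneg fun i => abs_le_abs_of_nonneg (hu i) (huv i)

lemma Matrix.permMatrix_mem_unitaryGroup {n : Type*} [Fintype n] [DecidableEq n]
    (σ : Equiv.Perm n) : σ.permMatrix ℂ ∈ Matrix.unitaryGroup n ℂ := by
  rw [Matrix.mem_unitaryGroup_iff, Matrix.star_eq_conjTranspose, Matrix.conjTranspose_permMatrix,
    ← Matrix.permMatrix_mul, inv_mul_cancel, Matrix.permMatrix_one]

lemma Matrix.permMatrix_mul_diagonal_mul_star {n : Type*} [Fintype n] [DecidableEq n]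
    (σ : Equiv.Perm n) (w : n → ℂ) :
    σ.permMatrix ℂ * Matrix.diagonal w * star (σ.permMatrix ℂ) = Matrix.diagonal (w ∘ σ) := by
  rw [Matrix.star_eq_conjTranspose, Matrix.conjTranspose_permMatrix, Equiv.Perm.permMatrix,
    Equiv.Perm.permMatrix, PEquiv.toMatrix_toPEquiv_mul, PEquiv.mul_toMatrix_toPEquiv,
    Matrix.submatrix_submatrix, ← Matrix.submatrix_diagonal_equiv]
  rfl

namespace UINorm

variable {d : ℕ} (Φ : UINorm d)

noncomputable def symmGauge : Seminorm ℝ (Fin d → ℝ) :=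
  Seminorm.of (fun v => Φ.N (Matrix.diagonal fun i => (v i : ℂ)))
    (fun u v => by
      convert Φ.add_le (Matrix.diagonal fun i => (u i : ℂ)) (Matrix.diagonal fun i => (v i : ℂ))
      rw [Matrix.diagonal_add]
      congr 1
      funext i
      simp)
    (fun r v => by
      have : Matrix.diagonal (fun i => ((r • v) i : ℂ)) =
          (r : ℂ) • Matrix.diagonal fun i => (v i : ℂ) := by
        ext i j
        by_cases h : i = j <;> simp [h]
      simp only [this, Φ.smul_eq, Complex.norm_real])

lemma symmGauge_apply (v : Fin d → ℝ) :
    Φ.symmGauge v = Φ.N (Matrix.diagonal fun i => (v i : ℂ)) := rfl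

lemma symmGauge_comp_perm (σ : Equiv.Perm (Fin d)) (v : Fin d → ℝ) :
    Φ.symmGauge (v ∘ σ) = Φ.symmGauge v := by
  have hσ := Matrix.permMatrix_mem_unitaryGroup σ
  rw [symmGauge_apply, symmGauge_apply, ← Φ.unitary_inv _ _ (Matrix.diagonal fun i => (v i : ℂ))
    hσ (Unitary.star_mem hσ), Matrix.permMatrix_mul_diagonal_mul_star]
  rfl

lemma symmGauge_update_neg (v : Fin d → ℝ) (i : Fin d) :
    Φ.symmGauge (update v i (-v i)) = Φ.symmGauge v := by
  set E : Matrix (Fin d) (Fin d) ℂ := Matrix.diagonal (update 1 i (-1))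
  have hE : E ∈ Matrix.unitaryGroup (Fin d) ℂ := by
    rw [Matrix.mem_unitaryGroup_iff, Matrix.star_eq_conjTranspose, Matrix.diagonal_conjTranspose,
      Matrix.diagonal_mul_diagonal, ← Matrix.diagonal_one]
    congr 1
    funext j
    by_cases h : j = i <;> simp [h]
  rw [symmGauge_apply, symmGauge_apply, ← Φ.unitary_inv E 1 _ hE (one_mem _), Matrix.mul_one,
    Matrix.diagonal_mul_diagonal]
  congr 2
  funext j
  by_cases h : j = i <;> simp [h]

lemma monotoneOn_symmGauge : MonotoneOn Φ.symmGauge (Ici 0) :=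
  Φ.symmGauge.convexOn.quasiconvexOn.monotoneOn_of_neg Φ.symmGauge_update_neg

lemma symmGauge_comp_eigenvalues {A : Matrix (Fin d) (Fin d) ℂ} (hA : A.IsHermitian)
    (f : ℝ → ℝ) : Φ.symmGauge (f ∘ hA.eigenvalues) = Φ.N (herFun hA f) :=
  (Φ.unitary_inv _ _ _ hA.eigenvectorUnitary.2 (Unitary.star_mem hA.eigenvectorUnitary.2)).symm

lemma symmGauge_comp_eigDesc {A : Matrix (Fin d) (Fin d) ℂ} (hA : A.IsHermitian) (f : ℝ → ℝ) :
    Φ.symmGauge (f ∘ eigDesc hA) = Φ.N (herFun hA f) := by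
  rw [← Φ.symmGauge_comp_eigenvalues,
    ← Φ.symmGauge_comp_perm (Fin.revPerm.trans (Tuple.sort hA.eigenvalues)) (f ∘ hA.eigenvalues)]
  rfl

end UINorm

lemma eigDesc_antitone {d : ℕ} {A : Matrix (Fin d) (Fin d) ℂ} (hA : A.IsHermitian) :
    Antitone (eigDesc hA) :=
  fun _ _ h => Tuple.monotone_sort hA.eigenvalues (Fin.rev_le_rev.2 h)

/-- **Theorem 3.1, (a) ⇒ (b), discrete case.** If `λ(A) ≺_w ∑ l, p l • λ(B l)` for
self-adjoint matrices `A, B l` and weights `p l ≥ 0` summing to `1`, then for every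
non-decreasing convex `f : ℝ → [0,∞)` and every unitarily invariant norm `N`,
`N (f(A)) ≤ ∑ l, p l * N (f(B l))`. -/
theorem weak_majorization_average_implies_norm_ineq
    {d m : ℕ} {A : Matrix (Fin d) (Fin d) ℂ} (hA : A.IsHermitian)
    {B : Fin m → Matrix (Fin d) (Fin d) ℂ} (hB : ∀ l, (B l).IsHermitian)
    (p : Fin m → ℝ) (hp : ∀ l, 0 ≤ p l) (hp_sum : ∑ l, p l = 1)
    (hmaj : ∀ k, k ≤ d →
      ∑ i ∈ Finset.univ.filter (fun i : Fin d => (i : ℕ) < k), eigDesc hA i ≤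
      ∑ i ∈ Finset.univ.filter (fun i : Fin d => (i : ℕ) < k), ∑ l, p l * eigDesc (hB l) i) :
    ∀ f : ℝ → ℝ, Monotone f → ConvexOn ℝ Set.univ f → (∀ x, 0 ≤ f x) →
      ∀ Φ : UINorm d, Φ.N (herFun hA f) ≤ ∑ l, p l * Φ.N (herFun (hB l) f) := by
  intro f hmono hf hf0 Φ
  set c : Fin d → ℝ := ∑ l, p l • (f ∘ eigDesc (hB l))
  have hjensen : f ∘ (fun i => ∑ l, p l * eigDesc (hB l) i) ≤ c := fun i => by
    simpa [c] using hf.map_sum_le (fun l _ => hp l) hp_sum fun l _ => mem_univ (eigDesc (hB l) i)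
  have hc : Antitone c := fun i j hij => by
    simpa [c] using Finset.sum_le_sum fun l _ =>
      mul_le_mul_of_nonneg_left ((hmono.comp_antitone (eigDesc_antitone (hB l))) hij) (hp l)
  have hmajc : WeakMajorized (f ∘ eigDesc hA) c :=
    ((show WeakMajorized _ _ from hmaj).comp_convex (eigDesc_antitone hA) hmono hf).trans_le
      hjensen
  calc Φ.N (herFun hA f) = Φ.symmGauge (f ∘ eigDesc hA) := (Φ.symmGauge_comp_eigDesc hA f).symm
    _ ≤ Φ.symmGauge c :=
      hmajc.le_of_quasiconvexOn Φ.symmGauge_comp_perm Φ.symmGauge.convexOn.quasiconvexOn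
        Φ.monotoneOn_symmGauge (hmono.comp_antitone (eigDesc_antitone hA)) hc fun _ => hf0 _
    _ ≤ ∑ l, p l • Φ.symmGauge (f ∘ eigDesc (hB l)) :=
      Φ.symmGauge.convexOn.map_sum_le (fun l _ => hp l) hp_sum fun _ _ => mem_univ _
    _ = ∑ l, p l * Φ.N (herFun (hB l) f) := by simp [Φ.symmGauge_comp_eigDesc]
end

section
/- Let a, b in R^d_+ have entries in decreasing order with a log-majorized by b, and suppose b^{(m)} in R^d_+ are vectors with strictly positive entries in decreasing order decreasing to b as m → ∞. Then there exist m_0 and vectors a^{(m)} in R^d_+ for m ≥ m_0 with strictly positive entries in decreasing order such that a^{(m)} → a, a ≤ a^{(m)} entrywise, and a^{(m)} is log-majorized by b^{(m)} for all m ≥ m_0. -/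
/-!
Let `a_J = ⋯ = a_{d-1} = g` be the last constant block of `a`. Keep `a_i` for `i < J` and
replace the block by the constant `τ_m` with `∏_{i<J} a_i · τ_m ^ (d - J) = ∏ b^{(m)}`. Since
`∏ b^{(m)} → ∏ b = ∏ a` from above, `τ_m → g` from above, which gives `a ≤ a^{(m)} → a`, and
`a^{(m)}` is decreasing as soon as `τ_m ≤ a_{J-1}`. The prefix inequalities for `k ≤ J` are
inherited from `a ≺_log b ≤ b^{(m)}`; for `k > J` they hold because the geometric mean of the
decreasing vector `b^{(m)}` over `[J, k)` dominates its geometric mean over `[J, d)`.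
This treats `a_d > 0` and `a_d = 0` alike.
-/

open Finset Filter Topology

theorem Finset.prod_pow_card_le_prod_pow_card {ι R : Type*} [CommMonoidWithZero R] [Preorder R]
    [ZeroLEOneClass R] [PosMulMono R] {s t : Finset ι} {x : ι → R}
    (h0 : ∀ j ∈ t, 0 ≤ x j) (hle : ∀ i ∈ s, ∀ j ∈ t, x j ≤ x i) :
    (∏ j ∈ t, x j) ^ #s ≤ (∏ i ∈ s, x i) ^ #t :=
  calc (∏ j ∈ t, x j) ^ #s = ∏ _i ∈ s, ∏ j ∈ t, x j := (prod_const _).symm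
    _ ≤ ∏ i ∈ s, ∏ _j ∈ t, x i :=
      prod_le_prod (fun _ _ => prod_nonneg h0) fun i hi => prod_le_prod h0 (hle i hi)
    _ = (∏ i ∈ s, x i) ^ #t := by simp only [prod_const, prod_pow]

theorem Antitone.prod_range_pow_mul_prod_range_pow_le {x : ℕ → ℝ} (hx : Antitone x)
    (h0 : ∀ j, 0 ≤ x j) (J p q : ℕ) :
    (∏ j ∈ range J, x j) ^ q * (∏ j ∈ range (J + p + q), x j) ^ p ≤
      (∏ j ∈ range (J + p), x j) ^ (p + q) := by
  have hsplit := prod_range_mul_prod_Ico x (Nat.le_add_right J p)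
  have hsplit' := prod_range_mul_prod_Ico x (Nat.le_add_right (J + p) q)
  have htail : (∏ j ∈ Ico (J + p) (J + p + q), x j) ^ p ≤ (∏ j ∈ Ico J (J + p), x j) ^ q := by
    simpa using prod_pow_card_le_prod_pow_card (s := Ico J (J + p)) (t := Ico (J + p) (J + p + q))
      (fun j _ => h0 j) fun i hi j hj => hx (by grind)
  rw [← hsplit', ← hsplit]
  calc _ = (∏ j ∈ range J, x j) ^ (p + q) * (∏ j ∈ Ico J (J + p), x j) ^ p *
        (∏ j ∈ Ico (J + p) (J + p + q), x j) ^ p := by ring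
    _ ≤ (∏ j ∈ range J, x j) ^ (p + q) * (∏ j ∈ Ico J (J + p), x j) ^ p *
        (∏ j ∈ Ico J (J + p), x j) ^ q :=
      mul_le_mul_of_nonneg_left htail <| mul_nonneg (pow_nonneg (prod_nonneg fun j _ => h0 j) _)
        (pow_nonneg (prod_nonneg fun j _ => h0 j) _)
    _ = _ := by ring

def prefixProd {d : ℕ} (x : Fin d → ℝ) (k : ℕ) : ℝ :=
  ∏ i ∈ univ.filter (fun i : Fin d => (i : ℕ) < k), x i

def LogMajorized {d : ℕ} (x y : Fin d → ℝ) : Prop :=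
  (∀ k ≤ d, prefixProd x k ≤ prefixProd y k) ∧ ∏ i, x i = ∏ i, y i

def replaceTail {d : ℕ} (a : Fin d → ℝ) (J : ℕ) (t : ℝ) : Fin d → ℝ :=
  fun i => if (i : ℕ) < J then a i else t

section
variable {d n : ℕ}

theorem LogMajorized.refl (x : Fin d → ℝ) : LogMajorized x x := ⟨fun _ _ => le_rfl, rfl⟩

theorem prefixProd_nonneg {x : Fin d → ℝ} (hx : ∀ i, 0 ≤ x i) (k : ℕ) : 0 ≤ prefixProd x k :=
  prod_nonneg fun i _ => hx i

theorem prefixProd_le_prefixProd {x y : Fin d → ℝ} (hx : ∀ i, 0 ≤ x i) (hxy : ∀ i, x i ≤ y i)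
    (k : ℕ) : prefixProd x k ≤ prefixProd y k :=
  prod_le_prod (fun i _ => hx i) fun i _ => hxy i

theorem prefixProd_self (x : Fin d → ℝ) : prefixProd x d = ∏ i, x i := by
  simp [prefixProd]

/-- Through `Fin.clamp`, `x` becomes a sequence on `ℕ` that is antitone whenever `x` is. -/
theorem prefixProd_eq_prod_range (x : Fin (n + 1) → ℝ) {k : ℕ} (hk : k ≤ n + 1) :
    prefixProd x k = ∏ j ∈ range k, x (Fin.clamp j n) := by
  refine prod_nbij (fun i => (i : ℕ)) (by simp) (fun i _ j _ => Fin.ext) (fun j hj => ?_) ?_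
  · exact ⟨⟨j, by simp at hj; omega⟩, by simpa using hj, rfl⟩
  · intro i _
    congr
    ext
    simp [Fin.is_le]

theorem prefixProd_replaceTail_of_le (a : Fin d → ℝ) {J k : ℕ} (t : ℝ) (hk : k ≤ J) :
    prefixProd (replaceTail a J t) k = prefixProd a k :=
  prod_congr rfl fun i hi => if_pos (by simp at hi; omega)

theorem prefixProd_replaceTail (a : Fin (n + 1) → ℝ) {J k : ℕ} (t : ℝ) (hJk : J ≤ k)
    (hk : k ≤ n + 1) : prefixProd (replaceTail a J t) k = prefixProd a J * t ^ (k - J) := by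
  rw [prefixProd_eq_prod_range _ hk, prefixProd_eq_prod_range _ (hJk.trans hk),
    ← prod_range_mul_prod_Ico _ hJk]
  congr 1
  · refine prod_congr rfl fun j hj => if_pos ?_
    simp at hj
    simp; omega
  · refine (prod_congr rfl fun j hj => if_neg ?_).trans (by simp)
    simp at hj
    simp; omega

theorem logMajorized_replaceTail {a y : Fin (n + 1) → ℝ} (hy : Antitone y) (hy0 : ∀ i, 0 ≤ y i)
    {J : ℕ} (hJ : J ≤ n) {t : ℝ} (hprefix : ∀ k ≤ J, prefixProd a k ≤ prefixProd y k)
    (hA : 0 ≤ prefixProd a J) (ht : prefixProd a J * t ^ (n + 1 - J) = ∏ i, y i) :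
    LogMajorized (replaceTail a J t) y := by
  refine ⟨fun k hk => ?_, ?_⟩
  · rcases le_total k J with hkJ | hJk
    · rw [prefixProd_replaceTail_of_le a t hkJ]
      exact hprefix k hkJ
    rw [prefixProd_replaceTail a t hJk hk]
    obtain ⟨p, rfl⟩ := Nat.exists_eq_add_of_le hJk
    obtain ⟨q, hq⟩ : ∃ q, J + p + q = n + 1 := ⟨n + 1 - (J + p), by omega⟩
    have hy' : Antitone fun j => y (Fin.clamp j n) := hy.comp_monotone Fin.clamp_monotone
    have key := hy'.prod_range_pow_mul_prod_range_pow_le (fun j => hy0 _) J p q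
    rw [← prefixProd_eq_prod_range _ (by omega), ← prefixProd_eq_prod_range _ hk, hq,
      ← prefixProd_eq_prod_range _ le_rfl, prefixProd_self] at key
    rw [show n + 1 - J = p + q by omega] at ht
    rw [Nat.add_sub_cancel_left]
    refine le_of_pow_le_pow_left₀ (n := p + q) (by omega) (prefixProd_nonneg hy0 _) ?_
    calc (prefixProd a J * t ^ p) ^ (p + q)
        = prefixProd a J ^ q * (prefixProd a J * t ^ (p + q)) ^ p := by ring
      _ ≤ prefixProd y J ^ q * (∏ i, y i) ^ p := by
        rw [ht]
        exact mul_le_mul_of_nonneg_right (pow_le_pow_left₀ hA (hprefix J le_rfl) q)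
          (pow_nonneg (prod_nonneg fun i _ => hy0 i) p)
      _ ≤ _ := key
  · rw [← prefixProd_self, prefixProd_replaceTail a t (by omega) le_rfl, ht]

theorem replaceTail_pos {a : Fin d → ℝ} {J : ℕ} {t : ℝ}
    (ha : ∀ i : Fin d, (i : ℕ) < J → 0 < a i) (ht : 0 < t) (i : Fin d) :
    0 < replaceTail a J t i := by
  unfold replaceTail
  split_ifs with h
  exacts [ha i h, ht]

theorem le_replaceTail {a : Fin d → ℝ} {J : ℕ} {t : ℝ} (ht : ∀ i : Fin d, J ≤ (i : ℕ) → a i ≤ t)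
    (i : Fin d) : a i ≤ replaceTail a J t i := by
  unfold replaceTail
  split_ifs with h
  exacts [le_rfl, ht i (not_lt.1 h)]

theorem antitone_replaceTail {a : Fin d → ℝ} (ha : Antitone a) {J : ℕ} {t : ℝ}
    (ht : ∀ i : Fin d, (i : ℕ) < J → t ≤ a i) : Antitone (replaceTail a J t) := by
  intro i j hij
  have : (i : ℕ) ≤ j := hij
  unfold replaceTail
  split_ifs with hj hi hi
  · exact ha hij
  · omega
  · exact ht i hi
  · exact le_rfl

theorem eventually_antitone_replaceTail {ι : Type*} {l : Filter ι} {a : Fin d → ℝ}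
    (ha : Antitone a) {J : ℕ} {g : ℝ} (hhead : ∀ i : Fin d, (i : ℕ) < J → g < a i) {τ : ι → ℝ}
    (hτ : Tendsto τ l (𝓝 g)) : ∀ᶠ m in l, Antitone (replaceTail a J (τ m)) := by
  have : ∀ᶠ m in l, ∀ i : Fin d, (i : ℕ) < J → τ m ≤ a i :=
    eventually_all.2 fun i => by
      by_cases hi : (i : ℕ) < J
      · filter_upwards [hτ.eventually_le_const (hhead i hi)] with m hm _ using hm
      · exact .of_forall fun m h => absurd h hi
  filter_upwards [this] with m hm using antitone_replaceTail ha hm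

theorem continuous_replaceTail (a : Fin d → ℝ) (J : ℕ) : Continuous (replaceTail a J) :=
  continuous_pi fun i => by unfold replaceTail; split_ifs <;> fun_prop

theorem replaceTail_eq_self {a : Fin d → ℝ} {J : ℕ} {t : ℝ}
    (ht : ∀ i : Fin d, J ≤ (i : ℕ) → a i = t) : replaceTail a J t = a := by
  ext i
  unfold replaceTail
  split_ifs with h
  exacts [rfl, (ht i (not_lt.1 h)).symm]

theorem Antitone.exists_tail_eq_last {β : Type*} [PartialOrder β] {a : Fin (n + 1) → β}
    (ha : Antitone a) :
    ∃ J ≤ n, (∀ i : Fin (n + 1), J ≤ (i : ℕ) → a i = a (Fin.last n)) ∧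
      ∀ i : Fin (n + 1), (i : ℕ) < J → a (Fin.last n) < a i := by
  classical
  set s := univ.filter fun i => a i = a (Fin.last n)
  have hs : s.Nonempty := ⟨Fin.last n, by simp [s]⟩
  refine ⟨s.min' hs, Fin.is_le _, fun i hi => ?_, fun i hi => ?_⟩
  · have hmem : a (s.min' hs) = a (Fin.last n) := (mem_filter.1 (s.min'_mem hs)).2
    exact le_antisymm (hmem ▸ ha (Fin.le_def.2 hi)) (ha (Fin.le_last i))
  · refine lt_of_le_of_ne (ha (Fin.le_last i)) fun h => ?_
    exact absurd (s.min'_le i (by simp [s, h])) (not_le.2 hi)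

theorem exists_mul_pow_eq_of_tendsto {A g : ℝ} {N : ℕ} (hA : 0 < A) (hg : 0 ≤ g) (hN : N ≠ 0)
    {P : ℕ → ℝ} (hP0 : ∀ m, 0 < P m) (hP : ∀ m, A * g ^ N ≤ P m)
    (hlim : Tendsto P atTop (𝓝 (A * g ^ N))) :
    ∃ τ : ℕ → ℝ, (∀ m, 0 < τ m ∧ g ≤ τ m ∧ A * τ m ^ N = P m) ∧ Tendsto τ atTop (𝓝 g) := by
  refine ⟨fun m => (P m / A) ^ (N⁻¹ : ℝ), fun m => ⟨by positivity [hP0 m], ?_, ?_⟩, ?_⟩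
  · rw [← Real.pow_rpow_inv_natCast hg hN]
    refine Real.rpow_le_rpow (by positivity) ?_ (by positivity)
    rw [le_div_iff₀' hA]
    exact hP m
  · rw [Real.rpow_inv_natCast_pow (div_pos (hP0 m) hA).le hN, mul_div_cancel₀ _ hA.ne']
  · have := (hlim.div_const A).rpow_const (p := (N⁻¹ : ℝ)) (Or.inr (by positivity))
    rwa [mul_div_cancel_left₀ _ hA.ne', Real.pow_rpow_inv_natCast hg hN] at this

end

theorem log_majorization_positive_approximation_general
    {d : ℕ} (a b : Fin d → ℝ)
    (ha_nonneg : ∀ i, 0 ≤ a i) (hb_nonneg : ∀ i, 0 ≤ b i)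
    (ha_dec : Antitone a)
    (hlogmaj : (∀ k, k ≤ d →
        ∏ i ∈ Finset.univ.filter (fun i : Fin d => (i : ℕ) < k), a i ≤
        ∏ i ∈ Finset.univ.filter (fun i : Fin d => (i : ℕ) < k), b i) ∧
      ∏ i, a i = ∏ i, b i)
    (b' : ℕ → Fin d → ℝ)
    (hb'_pos : ∀ m i, 0 < b' m i)
    (hb'_dec : ∀ m, Antitone (b' m))
    (hb'_mono : ∀ i, Antitone (fun m => b' m i))
    (hb'_lim : ∀ i, Filter.Tendsto (fun m => b' m i) Filter.atTop (nhds (b i))) :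
    ∃ (m₀ : ℕ) (a' : ℕ → Fin d → ℝ),
      (∀ m, m₀ ≤ m → (∀ i, 0 < a' m i) ∧ Antitone (a' m) ∧ (∀ i, a i ≤ a' m i) ∧
        ((∀ k, k ≤ d →
            ∏ i ∈ Finset.univ.filter (fun i : Fin d => (i : ℕ) < k), a' m i ≤
            ∏ i ∈ Finset.univ.filter (fun i : Fin d => (i : ℕ) < k), b' m i) ∧
          ∏ i, a' m i = ∏ i, b' m i)) ∧
      (∀ i, Filter.Tendsto (fun m => a' m i) Filter.atTop (nhds (a i))) := by
  rcases d with _ | n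
  · exact ⟨0, b', fun m _ => ⟨hb'_pos m, hb'_dec m, finZeroElim, LogMajorized.refl _⟩,
      finZeroElim⟩
  obtain ⟨J, hJn, hJtail, hJhead⟩ := ha_dec.exists_tail_eq_last
  have hb_le : ∀ m i, b i ≤ b' m i := fun m i => (hb'_mono i).le_of_tendsto (hb'_lim i) m
  have hA : 0 < prefixProd a J :=
    prod_pos fun i hi => (ha_nonneg _).trans_lt (hJhead i (by simpa using hi))
  have hprod : prefixProd a J * a (Fin.last n) ^ (n + 1 - J) = ∏ i, b i := by
    have := prefixProd_replaceTail a (a (Fin.last n)) (by omega : J ≤ n + 1) le_rfl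
    rwa [replaceTail_eq_self hJtail, prefixProd_self, hlogmaj.2, eq_comm] at this
  obtain ⟨τ, hτ, hτ_lim⟩ := exists_mul_pow_eq_of_tendsto hA (ha_nonneg _)
    (by omega : n + 1 - J ≠ 0) (P := fun m => ∏ i, b' m i)
    (fun m => prod_pos fun i _ => hb'_pos m i)
    (fun m => hprod ▸ prod_le_prod (fun i _ => hb_nonneg i) fun i _ => hb_le m i)
    (hprod ▸ tendsto_finsetProd _ fun i _ => hb'_lim i)
  obtain ⟨m₀, hm₀⟩ := eventually_atTop.1 (eventually_antitone_replaceTail ha_dec hJhead hτ_lim)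
  have ha'_lim := ((continuous_replaceTail a J).tendsto _).comp hτ_lim
  rw [replaceTail_eq_self hJtail] at ha'_lim
  refine ⟨m₀, fun m => replaceTail a J (τ m), fun m hm => ⟨?_, ?_, ?_, ?_⟩,
    tendsto_pi_nhds.1 ha'_lim⟩
  · exact replaceTail_pos (fun i hi => (ha_nonneg _).trans_lt (hJhead i hi)) (hτ m).1
  · exact hm₀ m hm
  · exact le_replaceTail fun i hi => (hJtail i hi).trans_le (hτ m).2.1
  · refine logMajorized_replaceTail (hb'_dec m) (fun i => (hb'_pos m i).le) hJn (fun k hk => ?_)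
      hA.le (hτ m).2.2
    exact (hlogmaj.1 k (by omega)).trans (prefixProd_le_prefixProd hb_nonneg (hb_le m) k)

/-- **Lemma 5.3.** Let `a, b ∈ ℝ^d_+` be in decreasing order with `a ≺_log b`, and let
`b' m` be vectors with strictly positive entries in decreasing order decreasing
(entrywise, monotonically) to `b`.  Then there are `m₀` and vectors `a' m` (for `m ≥ m₀`)
with strictly positive entries in decreasing order such that `a' m → a`, `a ≤ a' m`
entrywise, and `a' m ≺_log b' m` for all `m ≥ m₀`. -/
theorem log_majorization_positive_approximation
    {d : ℕ} (a b : Fin d → ℝ)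
    (ha_nonneg : ∀ i, 0 ≤ a i) (hb_nonneg : ∀ i, 0 ≤ b i)
    (ha_dec : Antitone a) (hb_dec : Antitone b)
    (hlogmaj : (∀ k, k ≤ d →
        ∏ i ∈ Finset.univ.filter (fun i : Fin d => (i : ℕ) < k), a i ≤
        ∏ i ∈ Finset.univ.filter (fun i : Fin d => (i : ℕ) < k), b i) ∧
      ∏ i, a i = ∏ i, b i)
    (b' : ℕ → Fin d → ℝ)
    (hb'_pos : ∀ m i, 0 < b' m i)
    (hb'_dec : ∀ m, Antitone (b' m))
    (hb'_mono : ∀ i, Antitone (fun m => b' m i))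
    (hb'_lim : ∀ i, Filter.Tendsto (fun m => b' m i) Filter.atTop (nhds (b i))) :
    ∃ (m₀ : ℕ) (a' : ℕ → Fin d → ℝ),
      (∀ m, m₀ ≤ m → (∀ i, 0 < a' m i) ∧ Antitone (a' m) ∧ (∀ i, a i ≤ a' m i) ∧
        ((∀ k, k ≤ d →
            ∏ i ∈ Finset.univ.filter (fun i : Fin d => (i : ℕ) < k), a' m i ≤
            ∏ i ∈ Finset.univ.filter (fun i : Fin d => (i : ℕ) < k), b' m i) ∧
          ∏ i, a' m i = ∏ i, b' m i)) ∧
      (∀ i, Filter.Tendsto (fun m => a' m i) Filter.atTop (nhds (a i))) :=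
  log_majorization_positive_approximation_general a b ha_nonneg hb_nonneg ha_dec hlogmaj b' hb'_pos
    hb'_dec hb'_mono hb'_lim
end

section
/- Let A, B_1, ..., B_m be positive definite d×d matrices and p_1,...,p_m nonnegative weights summing to 1. Suppose that for every p > 0 and every k in [d], ‖A^p‖_{(k)} ≤ prod_{l=1}^m ‖B_l^p‖_{(k)}^{p_l}, and moreover ‖A^{-p}‖_1 ≤ prod_{l=1}^m ‖B_l^{-p}‖_1^{p_l} for every p > 0. Then log λ(A) ≺ sum_l p_l log λ(B_l) (majorization). -/
/-!
The function `q ↦ log ∑_{i<k} λ_i ^ q` takes the value `log k` at `0` and has derivative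
`(1/k) ∑_{i<k} log λ_i` there. Taking logarithms of the power inequalities, subtracting
`log k = ∑ l, p l * log k` from both sides and dividing by `q > 0`, the limit `q ↓ 0` compares
these derivatives, which is the weak majorization. The same argument applied to the inverse
eigenvalues, i.e. to the negative powers, gives the reverse inequality for the full sums.
-/

open scoped BigOperators ComplexOrder

open Filter Topology Real Finset

variable {ι κ : Type*} [Fintype κ] {s : Finset ι}

theorem tendsto_log_sum_rpow_sub_log_card_div (hs : s.Nonempty) {x : ι → ℝ}
    (hx : ∀ i ∈ s, 0 < x i) :
    Tendsto (fun q : ℝ => (log (∑ i ∈ s, x i ^ q) - log #s) / q) (𝓝[>] 0)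
      (𝓝 ((∑ i ∈ s, log (x i)) / #s)) := by
  have hcard : ∑ i ∈ s, x i ^ (0 : ℝ) = #s := by simp
  have hderiv : HasDerivAt (fun q : ℝ => log (∑ i ∈ s, x i ^ q))
      ((∑ i ∈ s, x i ^ (0 : ℝ) * log (x i)) / ∑ i ∈ s, x i ^ (0 : ℝ)) 0 :=
    (HasDerivAt.fun_sum fun i hi => (hasStrictDerivAt_const_rpow (hx i hi) 0).hasDerivAt).log
      (by rw [hcard]; exact_mod_cast hs.card_pos.ne')
  rw [hcard] at hderiv
  simp only [rpow_zero, one_mul] at hderiv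
  refine hderiv.tendsto_slope_zero_right.congr fun q => ?_
  simp [div_eq_inv_mul]

theorem sum_log_le_of_forall_sum_rpow_le_prod {a : ι → ℝ} {b : κ → ι → ℝ} {p : κ → ℝ}
    (ha : ∀ i ∈ s, 0 < a i) (hb : ∀ l, ∀ i ∈ s, 0 < b l i) (hp : ∑ l, p l = 1)
    (h : ∀ q : ℝ, 0 < q → ∑ i ∈ s, a i ^ q ≤ ∏ l, (∑ i ∈ s, b l i ^ q) ^ p l) :
    ∑ i ∈ s, log (a i) ≤ ∑ i ∈ s, ∑ l, p l * log (b l i) := by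
  rcases s.eq_empty_or_nonempty with rfl | hs
  · simp
  have hpos : ∀ {x : ι → ℝ}, (∀ i ∈ s, 0 < x i) → ∀ q : ℝ, 0 < ∑ i ∈ s, x i ^ q :=
    fun hx q => sum_pos (fun i hi => rpow_pos_of_pos (hx i hi) q) hs
  have hlog (q : ℝ) (hq : 0 < q) :
      log (∑ i ∈ s, a i ^ q) ≤ ∑ l, p l * log (∑ i ∈ s, b l i ^ q) :=
    calc log (∑ i ∈ s, a i ^ q)
        ≤ log (∏ l, (∑ i ∈ s, b l i ^ q) ^ p l) := log_le_log (hpos ha q) (h q hq)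
      _ = ∑ l, p l * log (∑ i ∈ s, b l i ^ q) := by
        rw [log_prod fun l _ => (rpow_pos_of_pos (hpos (hb l) q) _).ne']
        exact sum_congr rfl fun l _ => log_rpow (hpos (hb l) q) _
  have hmean : (∑ i ∈ s, log (a i)) / #s ≤ ∑ l, p l * ((∑ i ∈ s, log (b l i)) / #s) := by
    refine le_of_tendsto_of_tendsto (tendsto_log_sum_rpow_sub_log_card_div hs ha)
      (tendsto_finsetSum _ fun l _ =>
        (tendsto_log_sum_rpow_sub_log_card_div hs (hb l)).const_mul (p l)) ?_
    filter_upwards [self_mem_nhdsWithin] with q (hq : 0 < q)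
    have hsplit : ∑ l, p l * ((log (∑ i ∈ s, b l i ^ q) - log #s) / q)
        = (∑ l, p l * log (∑ i ∈ s, b l i ^ q) - log #s) / q := by
      simp only [mul_div_assoc', mul_sub, ← sum_div, sum_sub_distrib, ← sum_mul, hp, one_mul]
    rw [hsplit]
    gcongr
    exact hlog q hq
  have hcard : (0 : ℝ) < #s := by exact_mod_cast hs.card_pos
  rw [sum_comm]
  simp only [← mul_sum]
  simp only [mul_div_assoc', ← sum_div] at hmean
  exact (div_le_div_iff_of_pos_right hcard).mp hmean

theorem sum_log_ge_of_forall_sum_rpow_neg_le_prod {a : ι → ℝ} {b : κ → ι → ℝ} {p : κ → ℝ}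
    (ha : ∀ i ∈ s, 0 < a i) (hb : ∀ l, ∀ i ∈ s, 0 < b l i) (hp : ∑ l, p l = 1)
    (h : ∀ q : ℝ, 0 < q → ∑ i ∈ s, a i ^ (-q) ≤ ∏ l, (∑ i ∈ s, b l i ^ (-q)) ^ p l) :
    ∑ i ∈ s, ∑ l, p l * log (b l i) ≤ ∑ i ∈ s, log (a i) := by
  have hinv := sum_log_le_of_forall_sum_rpow_le_prod (a := fun i => (a i)⁻¹)
    (b := fun l i => (b l i)⁻¹) (fun i hi => inv_pos.2 (ha i hi))
    (fun l i hi => inv_pos.2 (hb l i hi)) hp fun q hq => ?_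
  · simpa only [log_inv, mul_neg, sum_neg_distrib, neg_le_neg_iff] using hinv
  · have hpow {x : ι → ℝ} (hx : ∀ i ∈ s, 0 < x i) :
        ∑ i ∈ s, (x i)⁻¹ ^ q = ∑ i ∈ s, x i ^ (-q) :=
      sum_congr rfl fun i hi => by rw [inv_rpow (hx i hi).le, rpow_neg (hx i hi).le]
    simpa only [hpow ha, hpow (hb _)] using h q hq

theorem kyfan_power_ineqs_imply_log_majorization_general
    {d m : ℕ} {A : Matrix (Fin d) (Fin d) ℂ} (hA : A.PosDef)
    {B : Fin m → Matrix (Fin d) (Fin d) ℂ} (hB : ∀ l, (B l).PosDef)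
    (p : Fin m → ℝ) (hp_sum : ∑ l, p l = 1)
    (hpos : ∀ q : ℝ, 0 < q → ∀ k, k ≤ d →
      ∑ i ∈ Finset.univ.filter (fun i : Fin d => (i : ℕ) < k), eigDesc hA.1 i ^ q ≤
      ∏ l, (∑ i ∈ Finset.univ.filter (fun i : Fin d => (i : ℕ) < k),
        eigDesc (hB l).1 i ^ q) ^ p l)
    (hneg : ∀ q : ℝ, 0 < q →
      ∑ i, eigDesc hA.1 i ^ (-q) ≤ ∏ l, (∑ i, eigDesc (hB l).1 i ^ (-q)) ^ p l) :
    (∀ k, k ≤ d →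
        ∑ i ∈ Finset.univ.filter (fun i : Fin d => (i : ℕ) < k),
          Real.log (eigDesc hA.1 i) ≤
        ∑ i ∈ Finset.univ.filter (fun i : Fin d => (i : ℕ) < k),
          ∑ l, p l * Real.log (eigDesc (hB l).1 i)) ∧
      ∑ i, Real.log (eigDesc hA.1 i) = ∑ i, ∑ l, p l * Real.log (eigDesc (hB l).1 i) := by
  have hApos (i : Fin d) : 0 < eigDesc hA.1 i := hA.eigenvalues_pos _
  have hBpos (l : Fin m) (i : Fin d) : 0 < eigDesc (hB l).1 i := (hB l).eigenvalues_pos _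
  have hpartial (k : ℕ) (hk : k ≤ d) :=
    sum_log_le_of_forall_sum_rpow_le_prod (fun i _ => hApos i) (fun l i _ => hBpos l i) hp_sum
      fun q hq => hpos q hq k hk
  have hfull := sum_log_ge_of_forall_sum_rpow_neg_le_prod (fun i _ => hApos i)
    (fun l i _ => hBpos l i) hp_sum hneg
  refine ⟨hpartial, le_antisymm ?_ hfull⟩
  simpa only [Fin.is_lt, filter_true] using hpartial d le_rfl

/-- **Theorem 5.1, (II) ⇒ (I), discrete positive definite case.** Let `A, B l` be
positive definite and `p l ≥ 0` weights summing to `1`.  Assume the Ky Fan norm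
inequalities `‖A^p‖_(k) ≤ ∏ l, ‖(B l)^p‖_(k)^(p l)` for all `p > 0`, `k ∈ [d]`
(where `‖X^p‖_(k) = ∑_{i<k} λ_i(X)^p`), and the trace-norm inequalities
`‖A^{-p}‖₁ ≤ ∏ l, ‖(B l)^{-p}‖₁^(p l)` for all `p > 0`.  Then
`log λ(A) ≺ ∑ l, p l • log λ(B l)` (majorization). -/
theorem kyfan_power_ineqs_imply_log_majorization
    {d m : ℕ} {A : Matrix (Fin d) (Fin d) ℂ} (hA : A.PosDef)
    {B : Fin m → Matrix (Fin d) (Fin d) ℂ} (hB : ∀ l, (B l).PosDef)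
    (p : Fin m → ℝ) (hp : ∀ l, 0 ≤ p l) (hp_sum : ∑ l, p l = 1)
    (hpos : ∀ q : ℝ, 0 < q → ∀ k, k ≤ d →
      ∑ i ∈ Finset.univ.filter (fun i : Fin d => (i : ℕ) < k), eigDesc hA.1 i ^ q ≤
      ∏ l, (∑ i ∈ Finset.univ.filter (fun i : Fin d => (i : ℕ) < k),
        eigDesc (hB l).1 i ^ q) ^ p l)
    (hneg : ∀ q : ℝ, 0 < q →
      ∑ i, eigDesc hA.1 i ^ (-q) ≤ ∏ l, (∑ i, eigDesc (hB l).1 i ^ (-q)) ^ p l) :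
    (∀ k, k ≤ d →
        ∑ i ∈ Finset.univ.filter (fun i : Fin d => (i : ℕ) < k),
          Real.log (eigDesc hA.1 i) ≤
        ∑ i ∈ Finset.univ.filter (fun i : Fin d => (i : ℕ) < k),
          ∑ l, p l * Real.log (eigDesc (hB l).1 i)) ∧
      ∑ i, Real.log (eigDesc hA.1 i) = ∑ i, ∑ l, p l * Real.log (eigDesc (hB l).1 i) :=
  kyfan_power_ineqs_imply_log_majorization_general hA hB p hp_sum hpos hneg
end
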